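/- Let σ be a permutation of size n, and let A, B ⊆ {1,…,n} be disjoint k-element sets with σ_⟨A⟩ = σ_⟨B⟩. Write f_A(1) < ⋯ < f_A(n−k) for the increasing enumeration of {1,…,n}∖A and f_B(1) < ⋯ < f_B(n−k) for that of {1,…,n}∖B, and for p ∈ {1,…,n} let δ(p) = |{a ∈ A : a < p}| − |{b ∈ B : b < p}|. If p ∉ A ∪ B and δ(p) = 0 (a fixed point), then for every index i with f_A(i) ≠ f_B(i), the position p does not lie strictly between f_A(i) and f_B(i), and the value σ(p) does not lie strictly between σ(f_A(i)) and σ(f_B(i)). -/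

import Mathlib

/-!
The index of a position `p ∉ A` in the increasing enumeration of `Aᶜ` is `p` minus the number
of elements of `A` to the left of `p`. So `δ(p) = 0` means that `p = f_A(j) = f_B(j)` for a single
index `j`. Both `f_A(i)` and `f_B(i)` then lie on the side of `p` given by comparing `i` with `j`,
and since `σ_⟨A⟩ = σ_⟨B⟩` compares its `i`th and `j`th entries one way only, `σ(f_A(i))` and
`σ(f_B(i))` lie on the same side of `σ(p)`.
-/

open Finset

namespace Prolific

/-- The L¹ ("taxicab") distance between the `i`th and `j`th entries of `σ`. -/
def dperm {n : ℕ} (σ : Equiv.Perm (Fin n)) (i j : Fin n) : ℕ :=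
  Nat.dist (i : ℕ) (j : ℕ) + Nat.dist (σ i : ℕ) (σ j : ℕ)

/-- The breadth of a permutation: the minimum distance between two distinct entries. -/
noncomputable def breadth {n : ℕ} (σ : Equiv.Perm (Fin n)) : ℕ :=
  sInf {d : ℕ | ∃ i j : Fin n, i ≠ j ∧ d = dperm σ i j}

/-- The pattern `σ_⟨A⟩` of `σ` obtained by deleting the entries in positions `A`. -/
noncomputable def pattern {n m : ℕ} (σ : Equiv.Perm (Fin n)) (A : Finset (Fin n))
    (h : Aᶜ.card = m) : Equiv.Perm (Fin m) :=
  (Aᶜ.orderIsoOfFin h).toEquiv.trans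
    (((Equiv.subtypeEquiv (σ : Equiv.Perm (Fin n)) (fun a => by
        constructor
        · exact fun ha => Finset.mem_image_of_mem σ ha
        · intro ha
          rcases Finset.mem_image.mp ha with ⟨x, hx, hxa⟩
          rwa [← σ.injective hxa])).trans
      ((Aᶜ.image σ).orderIsoOfFin
        (by rw [Finset.card_image_of_injective _ σ.injective, h])).toEquiv.symm))

/-- `σ_⟨A⟩ = σ_⟨B⟩` (in particular the two patterns have the same size). -/
def PatternEq {n : ℕ} (σ : Equiv.Perm (Fin n)) (A B : Finset (Fin n)) : Prop :=
  ∃ (m : ℕ) (hA : Aᶜ.card = m) (hB : Bᶜ.card = m), pattern σ A hA = pattern σ B hB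

/-- `σ` is `k`-prolific: distinct `k`-element sets of positions produce distinct patterns. -/
def IsProlific {n : ℕ} (k : ℕ) (σ : Equiv.Perm (Fin n)) : Prop :=
  ∀ A B : Finset (Fin n), A.card = k → B.card = k → A ≠ B → ¬ PatternEq σ A B


/-- The discrepancy `δ(p)`: the number of elements of `A` strictly to the left of `p`
minus the number of elements of `B` strictly to the left of `p`. -/
def delta {n : ℕ} (A B : Finset (Fin n)) (p : Fin n) : ℤ :=
  ((A.filter fun a => a < p).card : ℤ) - ((B.filter fun b => b < p).card : ℤ)

theorem card_filter_lt_orderEmbOfFin {α : Type*} [LinearOrder α] (s : Finset α) {m : ℕ}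
    (h : #s = m) (i : Fin m) : #(s.filter (· < s.orderEmbOfFin h i)) = i := by
  have : s.filter (· < s.orderEmbOfFin h i) = (Iio i).map (s.orderEmbOfFin h).toEmbedding := by
    ext x
    simp only [mem_filter, mem_map, mem_Iio, RelEmbedding.coe_toEmbedding]
    constructor
    · rintro ⟨hx, hlt⟩
      obtain ⟨j, rfl⟩ : x ∈ Set.range (s.orderEmbOfFin h) := by rwa [range_orderEmbOfFin]
      exact ⟨j, (s.orderEmbOfFin h).lt_iff_lt.mp hlt, rfl⟩
    · rintro ⟨j, hj, rfl⟩
      exact ⟨orderEmbOfFin_mem s h j, (s.orderEmbOfFin h).lt_iff_lt.mpr hj⟩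
  rw [this, card_map, Fin.card_Iio]

theorem card_filter_compl_add_card_filter {α : Type*} [Fintype α] [DecidableEq α]
    (s : Finset α) (q : α → Prop) [DecidablePred q] :
    #(sᶜ.filter q) + #(s.filter q) = #(univ.filter q) := by
  rw [← card_union_of_disjoint (disjoint_filter_filter disjoint_compl_left), ← filter_union,
    union_comm, union_compl]

theorem val_add_card_filter_lt_orderEmbOfFin_compl {n m : ℕ} (A : Finset (Fin n))
    (h : #Aᶜ = m) (i : Fin m) :
    (i : ℕ) + #(A.filter (· < Aᶜ.orderEmbOfFin h i)) = Aᶜ.orderEmbOfFin h i := by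
  rw [← card_filter_lt_orderEmbOfFin Aᶜ h i, card_filter_compl_add_card_filter,
    filter_gt_eq_Iio, Fin.card_Iio]

theorem exists_orderEmbOfFin_compl_eq_of_delta_eq_zero {n m : ℕ} {A B : Finset (Fin n)}
    (hA : #Aᶜ = m) (hB : #Bᶜ = m) {p : Fin n} (hpA : p ∉ A) (hpB : p ∉ B)
    (hδ : delta A B p = 0) :
    ∃ j, Aᶜ.orderEmbOfFin hA j = p ∧ Bᶜ.orderEmbOfFin hB j = p := by
  obtain ⟨j, hj⟩ : p ∈ Set.range (Aᶜ.orderEmbOfFin hA) := by simpa using hpA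
  obtain ⟨j', hj'⟩ : p ∈ Set.range (Bᶜ.orderEmbOfFin hB) := by simpa using hpB
  have hjA := val_add_card_filter_lt_orderEmbOfFin_compl A hA j
  have hjB := val_add_card_filter_lt_orderEmbOfFin_compl B hB j'
  rw [hj] at hjA
  rw [hj'] at hjB
  have : j = j' := by unfold delta at hδ; omega
  exact ⟨j, hj, this ▸ hj'⟩

theorem pattern_lt_pattern_iff {n m : ℕ} (σ : Equiv.Perm (Fin n)) (A : Finset (Fin n))
    (h : #Aᶜ = m) (i j : Fin m) :
    pattern σ A h i < pattern σ A h j ↔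
      σ (Aᶜ.orderEmbOfFin h i) < σ (Aᶜ.orderEmbOfFin h j) := by
  set T := (Aᶜ.image σ).orderIsoOfFin
    (by rw [card_image_of_injective _ σ.injective, h]) with hT
  have hTsymm : ∀ x, T.toEquiv.symm x = T.symm x := fun _ => rfl
  simp only [pattern, Equiv.trans_apply, ← hT, hTsymm, T.symm.lt_iff_lt,
    Equiv.subtypeEquiv_apply, Subtype.mk_lt_mk]
  rfl

theorem not_between_of_lt_iff_lt {α : Type*} [Preorder α] {x y p : α}
    (h : x < p ↔ y < p) : ¬((x < p ∧ p < y) ∨ (y < p ∧ p < x)) := by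
  rintro (⟨hx, hy⟩ | ⟨hy, hx⟩)
  · exact lt_asymm hy (h.mp hx)
  · exact lt_asymm hx (h.mpr hy)

theorem fixed_point_not_between_general {n k : ℕ} (σ : Equiv.Perm (Fin n))
    (A B : Finset (Fin n))
    (hA : Aᶜ.card = n - k) (hB : Bᶜ.card = n - k)
    (hpat : pattern σ A hA = pattern σ B hB)
    (p : Fin n) (hpA : p ∉ A) (hpB : p ∉ B) (hδ : delta A B p = 0) :
    ∀ i : Fin (n - k),
      (Aᶜ.orderIsoOfFin hA i).1 ≠ (Bᶜ.orderIsoOfFin hB i).1 →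
      ¬(((Aᶜ.orderIsoOfFin hA i).1 < p ∧ p < (Bᶜ.orderIsoOfFin hB i).1) ∨
        ((Bᶜ.orderIsoOfFin hB i).1 < p ∧ p < (Aᶜ.orderIsoOfFin hA i).1)) ∧
      ¬((σ (Aᶜ.orderIsoOfFin hA i).1 < σ p ∧ σ p < σ (Bᶜ.orderIsoOfFin hB i).1) ∨
        (σ (Bᶜ.orderIsoOfFin hB i).1 < σ p ∧ σ p < σ (Aᶜ.orderIsoOfFin hA i).1)) := by
  intro i _
  obtain ⟨j, hjA, hjB⟩ := exists_orderEmbOfFin_compl_eq_of_delta_eq_zero hA hB hpA hpB hδ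
  simp only [coe_orderIsoOfFin_apply]
  constructor <;> apply not_between_of_lt_iff_lt
  · calc _ ↔ i < j := by rw [← hjA, OrderEmbedding.lt_iff_lt]
      _ ↔ _ := by rw [← hjB, OrderEmbedding.lt_iff_lt]
  · calc _ ↔ pattern σ A hA i < pattern σ A hA j := by rw [pattern_lt_pattern_iff, hjA]
      _ ↔ _ := by rw [hpat, pattern_lt_pattern_iff, hjB]

/-- A fixed point `p` (a point outside `A ∪ B` with `δ(p) = 0`) never lies, in position
or in value, strictly between the pair of points fulfilling a common entry of the two
equal patterns. -/
theorem fixed_point_not_between {n k : ℕ} (σ : Equiv.Perm (Fin n))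
    (A B : Finset (Fin n)) (hAk : A.card = k) (hBk : B.card = k)
    (hdisj : Disjoint A B)
    (hA : Aᶜ.card = n - k) (hB : Bᶜ.card = n - k)
    (hpat : pattern σ A hA = pattern σ B hB)
    (p : Fin n) (hpA : p ∉ A) (hpB : p ∉ B) (hδ : delta A B p = 0) :
    ∀ i : Fin (n - k),
      (Aᶜ.orderIsoOfFin hA i).1 ≠ (Bᶜ.orderIsoOfFin hB i).1 →
      ¬(((Aᶜ.orderIsoOfFin hA i).1 < p ∧ p < (Bᶜ.orderIsoOfFin hB i).1) ∨
        ((Bᶜ.orderIsoOfFin hB i).1 < p ∧ p < (Aᶜ.orderIsoOfFin hA i).1)) ∧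
      ¬((σ (Aᶜ.orderIsoOfFin hA i).1 < σ p ∧ σ p < σ (Bᶜ.orderIsoOfFin hB i).1) ∨
        (σ (Bᶜ.orderIsoOfFin hB i).1 < σ p ∧ σ p < σ (Aᶜ.orderIsoOfFin hA i).1)) :=
  fixed_point_not_between_general σ A B hA hB hpat p hpA hpB hδ

end Prolific
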